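/- Let p ≥ 1 and q ≥ 1 be integers. Consider real numbers x_1, …, x_5 satisfying: x_j ≥ 0 for all j; x_1 + x_2 − x_4 ≥ −1; x_1 − x_2 + x_4 ≥ −1; −x_1 + x_2 + x_4 ≥ −1; x_3 − x_2 ≥ −2p; x_5 − x_4 ≥ −2q; x_3 ≤ 1; and x_5 ≤ 1. Then x_1 ≤ 2p + 2q + 3, with equality exactly at (x_1, …, x_5) = (2p+2q+3, 2p+1, 1, 2q+1, 1). In particular the maximum of (2p+2q−2) + x_1 over this polytope is 4p + 4q + 1. -/
import Mathlib


/-- Feasibility for the linear program of case 43 (p, q ≠ 0, r = 0) with `Γ`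
supported on `{γ_3, γ_5}`. -/
def Feasible14 (p q : ℕ) (x1 x2 x3 x4 x5 : ℝ) : Prop :=
  0 ≤ x1 ∧ 0 ≤ x2 ∧ 0 ≤ x3 ∧ 0 ≤ x4 ∧ 0 ≤ x5 ∧
  x1 + x2 - x4 ≥ -1 ∧ x1 - x2 + x4 ≥ -1 ∧ -x1 + x2 + x4 ≥ -1 ∧
  x3 - x2 ≥ -(2 * (p : ℝ)) ∧ x5 - x4 ≥ -(2 * (q : ℝ)) ∧
  x3 ≤ 1 ∧ x5 ≤ 1

theorem stmt_14 (p q : ℕ) (hp : 1 ≤ p) (hq : 1 ≤ q) :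
    (∀ x1 x2 x3 x4 x5 : ℝ, Feasible14 p q x1 x2 x3 x4 x5 →
      x1 ≤ 2 * (p : ℝ) + 2 * (q : ℝ) + 3) ∧
    (∀ x1 x2 x3 x4 x5 : ℝ, Feasible14 p q x1 x2 x3 x4 x5 →
      x1 = 2 * (p : ℝ) + 2 * (q : ℝ) + 3 →
      x1 = 2 * (p : ℝ) + 2 * (q : ℝ) + 3 ∧ x2 = 2 * (p : ℝ) + 1 ∧ x3 = 1 ∧
        x4 = 2 * (q : ℝ) + 1 ∧ x5 = 1) ∧
    Feasible14 p q (2 * (p : ℝ) + 2 * (q : ℝ) + 3) (2 * (p : ℝ) + 1) 1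
      (2 * (q : ℝ) + 1) 1 ∧
    IsGreatest {v : ℝ | ∃ x1 x2 x3 x4 x5 : ℝ, Feasible14 p q x1 x2 x3 x4 x5 ∧
      v = (2 * (p : ℝ) + 2 * (q : ℝ) - 2) + x1} (4 * (p : ℝ) + 4 * (q : ℝ) + 1) := by
  have hp' : (1:ℝ) ≤ p := by exact_mod_cast hp
  have hq' : (1:ℝ) ≤ q := by exact_mod_cast hq
  have bound : ∀ x1 x2 x3 x4 x5 : ℝ, Feasible14 p q x1 x2 x3 x4 x5 →
      x1 ≤ 2 * (p : ℝ) + 2 * (q : ℝ) + 3 := by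
    rintro x1 x2 x3 x4 x5 ⟨h1,h2,h3,h4,h5,h6,h7,h8,h9,h10,h11,h12⟩
    linarith
  have feas : Feasible14 p q (2 * (p : ℝ) + 2 * (q : ℝ) + 3) (2 * (p : ℝ) + 1) 1
      (2 * (q : ℝ) + 1) 1 := by
    refine ⟨by linarith, by linarith, by norm_num, by linarith, by norm_num, ?_, ?_, ?_, ?_, ?_, le_refl _, le_refl _⟩ <;> linarith
  refine ⟨bound, ?_, feas, ?_, ?_⟩
  · rintro x1 x2 x3 x4 x5 ⟨h1,h2,h3,h4,h5,h6,h7,h8,h9,h10,h11,h12⟩ heq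
    refine ⟨heq, by linarith, by linarith, by linarith, by linarith⟩
  · exact ⟨_,_,_,_,_, feas, by ring⟩
  · rintro v ⟨x1,x2,x3,x4,x5,hf,rfl⟩
    have := bound _ _ _ _ _ hf
    linarith
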